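/- arXiv:1810.01010 — 3 statements merged into one kernel-verified Lean document; each statement's English description precedes it below -/
import Mathlib

section
/- Let Ω be an open subset of ℝ^n (with the Euclidean inner product), let u : Ω → ℝ be twice continuously differentiable, and suppose the function x ↦ u(x)² + ‖∇u(x)‖² attains a local maximum at a point x₀ ∈ Ω. If the symmetric bilinear form ξ ↦ u(x₀)‖ξ‖² + D²u(x₀)[ξ, ξ] is positive definite, then ∇u(x₀) = 0. -/
/-!
At a local maximum of `u² + ‖∇u‖²` its derivative `2 (u ∇u + D²u ∇u)` vanishes. Testing this
against `∇u` gives `u ‖∇u‖² + D²u(∇u, ∇u) = 0`, which positive definiteness of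
`ξ ↦ u ‖ξ‖² + D²u(ξ, ξ)` only allows for `∇u = 0`.
-/

open InnerProductSpace Gradient

section

variable {E : Type*} [NormedAddCommGroup E] [InnerProductSpace ℝ E] [CompleteSpace E]
  {u : E → ℝ} {x : E}

-- Over `ℝ` the conjugate-linear Riesz isomorphism is linear, whence the ascription to `≃L[ℝ]`.
theorem hasFDerivAt_gradient (h : DifferentiableAt ℝ (fderiv ℝ u) x) :
    HasFDerivAt (∇ u)
      (((toDual ℝ E).symm.toContinuousLinearEquiv :
        StrongDual ℝ E ≃L[ℝ] E).toContinuousLinearMap.comp (fderiv ℝ (fderiv ℝ u) x)) x :=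
  ((toDual ℝ E).symm.toContinuousLinearEquiv : StrongDual ℝ E ≃L[ℝ] E).hasFDerivAt.comp x
    h.hasFDerivAt

theorem hasFDerivAt_sq_add_norm_gradient_sq (hu : DifferentiableAt ℝ u x)
    (h : DifferentiableAt ℝ (fderiv ℝ u) x) :
    HasFDerivAt (fun y => u y ^ 2 + ‖∇ u y‖ ^ 2)
      ((2 : ℝ) • (u x • fderiv ℝ u x + (fderiv ℝ (fderiv ℝ u) x).flip (∇ u x))) x := by
  refine ((hu.hasFDerivAt.pow 2).add (hasFDerivAt_gradient h).norm_sq).congr_fderiv ?_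
  ext v
  have hess_gradient : fderiv ℝ u x ((toDual ℝ E).symm (fderiv ℝ (fderiv ℝ u) x v)) =
      fderiv ℝ (fderiv ℝ u) x v (∇ u x) := by
    rw [← inner_gradient_left, real_inner_comm, toDual_symm_apply]
  simp [hess_gradient, mul_assoc]

theorem IsLocalMax.smul_fderiv_add_hessian_gradient_eq_zero
    (hmax : IsLocalMax (fun y => u y ^ 2 + ‖∇ u y‖ ^ 2) x) (hu : DifferentiableAt ℝ u x)
    (h : DifferentiableAt ℝ (fderiv ℝ u) x) :
    u x • fderiv ℝ u x + (fderiv ℝ (fderiv ℝ u) x).flip (∇ u x) = 0 :=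
  (smul_eq_zero.mp <| hmax.hasFDerivAt_eq_zero <|
    hasFDerivAt_sq_add_norm_gradient_sq hu h).resolve_left two_ne_zero

theorem IsLocalMax.mul_norm_gradient_sq_add_hessian_eq_zero
    (hmax : IsLocalMax (fun y => u y ^ 2 + ‖∇ u y‖ ^ 2) x) (hu : DifferentiableAt ℝ u x)
    (h : DifferentiableAt ℝ (fderiv ℝ u) x) :
    u x * ‖∇ u x‖ ^ 2 + fderiv ℝ (fderiv ℝ u) x (∇ u x) (∇ u x) = 0 := by
  simpa [← inner_gradient_left, real_inner_self_eq_norm_sq] using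
    congr($(hmax.smul_fderiv_add_hessian_gradient_eq_zero hu h) (∇ u x))

end

/-- If `u` is `C²` on an open set `Ω ⊆ ℝⁿ`, the function `u² + ‖∇u‖²` has a local
maximum at `x₀ ∈ Ω`, and the bilinear form `ξ ↦ u(x₀)‖ξ‖² + D²u(x₀)[ξ,ξ]` is positive
definite, then `∇u(x₀) = 0`. -/
theorem stmt6 (n : ℕ) (Ω : Set (EuclideanSpace ℝ (Fin n))) (hΩ : IsOpen Ω)
    (u : EuclideanSpace ℝ (Fin n) → ℝ) (hu : ContDiffOn ℝ 2 u Ω)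
    (x₀ : EuclideanSpace ℝ (Fin n)) (hx₀ : x₀ ∈ Ω)
    (hmax : IsLocalMax (fun x => u x ^ 2 + ‖gradient u x‖ ^ 2) x₀)
    (hpd : ∀ ξ : EuclideanSpace ℝ (Fin n), ξ ≠ 0 →
      0 < u x₀ * ‖ξ‖ ^ 2 + iteratedFDeriv ℝ 2 u x₀ ![ξ, ξ]) :
    gradient u x₀ = 0 := by
  have hC : ContDiffAt ℝ 2 u x₀ := hu.contDiffAt (hΩ.mem_nhds hx₀)
  have hcrit := hmax.mul_norm_gradient_sq_add_hessian_eq_zero (hC.differentiableAt two_ne_zero)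
    ((hC.fderiv_right le_rfl).differentiableAt one_ne_zero)
  by_contra hne
  have hpos := hpd _ hne
  simp only [iteratedFDeriv_two_apply, Matrix.cons_val_zero, Matrix.cons_val_one,
    Matrix.cons_val_fin_one] at hpos
  linarith
end

section
/- Let Ω be a bounded open subset of ℝ^n, and let u : cl(Ω) → ℝ be continuously differentiable on the closure of Ω and twice continuously differentiable in Ω, such that at every x ∈ Ω the symmetric bilinear form ξ ↦ u(x)‖ξ‖² + D²u(x)[ξ, ξ] is positive definite. Then sup over cl(Ω) of (u² + ‖∇u‖²) is at most the maximum of: sup over ∂Ω of (u² + ‖∇u‖²), and sup over cl(Ω) of u². -/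
open scoped Topology
open InnerProductSpace

/-!
At an interior maximum `x` of `w = u² + ‖∇u‖²` the derivative of `w` vanishes; in the direction
`∇u(x)` it equals `2 (u(x) ‖∇u(x)‖² + D²u(x)[∇u(x), ∇u(x)])`, which is positive unless
`∇u(x) = 0` because `u·Id + D²u` is positive definite. So the maximum of `w` over the compact set
`cl(Ω)` is attained either on `∂Ω` or at a point where `w = u²`.
-/

theorem le_ciSup₂_of_bddAbove_image {α β : Type*} [ConditionallyCompleteLattice β] {s : Set α}
    {f : α → β} (hf : BddAbove (f '' s)) {a : α} (ha : a ∈ s) : f a ≤ ⨆ x ∈ s, f x := by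
  refine le_ciSup₂ (f := fun x _ => f x) (hf.mono ?_) a ha
  rintro _ ⟨_, ⟨x, rfl⟩, ⟨hx, rfl⟩⟩
  exact ⟨x, hx, rfl⟩

section Gradient

variable {E : Type*} [NormedAddCommGroup E] [InnerProductSpace ℝ E] [CompleteSpace E]
  {u : E → ℝ} {x : E}

theorem HasGradientWithinAt.hasGradientAt {s : Set E} {u' : E}
    (h : HasGradientWithinAt u u' s x) (hs : s ∈ 𝓝 x) : HasGradientAt u u' x :=
  HasFDerivWithinAt.hasFDerivAt h hs

theorem gradient_eventuallyEq_of_hasGradientWithinAt {s : Set E} {g : E → E}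
    (hg : ∀ y ∈ s, HasGradientWithinAt u (g y) s y) (hs : s ∈ 𝓝 x) :
    gradient u =ᶠ[𝓝 x] g := by
  filter_upwards [Filter.Eventually.eventually_nhds hs] with y hy
  exact ((hg y hy.self_of_nhds).hasGradientAt hy).gradient

theorem fderiv_sq_add_norm_sq_gradient_apply_gradient (hu : ContDiffAt ℝ 2 u x) :
    fderiv ℝ (fun y => u y ^ 2 + ‖gradient u y‖ ^ 2) x (gradient u x) =
      2 * (u x * ‖gradient u x‖ ^ 2 + iteratedFDeriv ℝ 2 u x ![gradient u x, gradient u x]) := by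
  have hu' : HasFDerivAt u (fderiv ℝ u x) x :=
    (hu.differentiableAt (by norm_num)).hasFDerivAt
  have hD : HasFDerivAt (fderiv ℝ u) (fderiv ℝ (fderiv ℝ u) x) x :=
    ((hu.fderiv_right (m := 1) le_rfl).differentiableAt one_ne_zero).hasFDerivAt
  have hgrad : HasFDerivAt (gradient u) _ x :=
    ((toDual ℝ E).symm.hasFDerivAt (x := fderiv ℝ u x)).comp x hD
  have hw : HasFDerivAt (fun y => u y ^ 2 + ‖gradient u y‖ ^ 2) _ x :=
    (hu'.pow 2).add hgrad.norm_sq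
  have hgrad_self : fderiv ℝ u x (gradient u x) = ‖gradient u x‖ ^ 2 := by
    rw [← inner_gradient_left, real_inner_self_eq_norm_sq]
  have hinner_toDual_symm (φ : StrongDual ℝ E) :
      ⟪gradient u x, (toDual ℝ E).symm φ⟫_ℝ = φ (gradient u x) := by
    rw [real_inner_comm, toDual_symm_apply]
  rw [hw.fderiv]
  simp only [Nat.add_one_sub_one, pow_one, nsmul_eq_mul, Nat.cast_ofNat,
    LinearIsometryEquiv.toContinuousLinearEquiv_symm, add_apply, smul_apply, hgrad_self,
    smul_eq_mul, ContinuousLinearMap.comp_apply, ContinuousLinearEquiv.coe_coe,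
    LinearIsometryEquiv.coe_symm_toContinuousLinearEquiv, coe_innerSL_apply, hinner_toDual_symm,
    iteratedFDeriv_two_apply, Matrix.cons_val_zero, Matrix.cons_val_one, Matrix.cons_val_fin_one]
  ring

theorem IsLocalMax.gradient_eq_zero_of_pos (hu : ContDiffAt ℝ 2 u x)
    (hmax : IsLocalMax (fun y => u y ^ 2 + ‖gradient u y‖ ^ 2) x)
    (hpos : ∀ ξ : E, ξ ≠ 0 → 0 < u x * ‖ξ‖ ^ 2 + iteratedFDeriv ℝ 2 u x ![ξ, ξ]) :
    gradient u x = 0 := by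
  by_contra hne
  have hderiv := fderiv_sq_add_norm_sq_gradient_apply_gradient hu
  rw [hmax.fderiv_eq_zero, zero_apply] at hderiv
  linarith [hpos _ hne]

theorem IsMaxOn.eq_zero_of_hasGradientWithinAt_of_pos {s : Set E} {g : E → E}
    (hg : ∀ y ∈ s, HasGradientWithinAt u (g y) s y) (hs : s ∈ 𝓝 x)
    (hmax : IsMaxOn (fun y => u y ^ 2 + ‖g y‖ ^ 2) s x) (hu : ContDiffAt ℝ 2 u x)
    (hpos : ∀ ξ : E, ξ ≠ 0 → 0 < u x * ‖ξ‖ ^ 2 + iteratedFDeriv ℝ 2 u x ![ξ, ξ]) :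
    g x = 0 := by
  have hgrad := gradient_eventuallyEq_of_hasGradientWithinAt hg hs
  rw [← hgrad.self_of_nhds]
  refine IsLocalMax.gradient_eq_zero_of_pos hu ?_ hpos
  exact (hmax.isLocalMax hs).congr (hgrad.mono fun y hy => by simp only [hy])

end Gradient

/-- Interior gradient estimate: let `Ω ⊆ ℝⁿ` be bounded and open, let `u` be continuously
differentiable on `cl(Ω)` (with gradient `g`, continuous on `cl(Ω)`) and `C²` in `Ω`, and
suppose `u·Id + Hess u` is positive definite at every point of `Ω`. Then the supremum of
`u² + ‖∇u‖²` over `cl(Ω)` is at most the maximum of its supremum over `∂Ω` and the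
supremum of `u²` over `cl(Ω)`. -/
theorem stmt7 (n : ℕ) (Ω : Set (EuclideanSpace ℝ (Fin n))) (hΩ : IsOpen Ω)
    (hbd : Bornology.IsBounded Ω)
    (u : EuclideanSpace ℝ (Fin n) → ℝ)
    (g : EuclideanSpace ℝ (Fin n) → EuclideanSpace ℝ (Fin n))
    (hg : ∀ x ∈ closure Ω, HasGradientWithinAt u (g x) (closure Ω) x)
    (hgc : ContinuousOn g (closure Ω))
    (hu2 : ContDiffOn ℝ 2 u Ω)
    (hpd : ∀ x ∈ Ω, ∀ ξ : EuclideanSpace ℝ (Fin n), ξ ≠ 0 →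
      0 < u x * ‖ξ‖ ^ 2 + iteratedFDeriv ℝ 2 u x ![ξ, ξ]) :
    (⨆ x ∈ closure Ω, (u x ^ 2 + ‖g x‖ ^ 2)) ≤
      max (⨆ x ∈ frontier Ω, (u x ^ 2 + ‖g x‖ ^ 2)) (⨆ x ∈ closure Ω, u x ^ 2) := by
  have huc : ContinuousOn u (closure Ω) := fun x hx =>
    (hg x hx).hasFDerivWithinAt.continuousWithinAt
  have hM :
      0 ≤ max (⨆ x ∈ frontier Ω, (u x ^ 2 + ‖g x‖ ^ 2)) (⨆ x ∈ closure Ω, u x ^ 2) :=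
    le_max_of_le_right (Real.iSup_nonneg fun x => Real.iSup_nonneg fun _ => sq_nonneg _)
  refine Real.iSup_le (fun x => Real.iSup_le (fun hx => ?_) hM) hM
  obtain ⟨x₀, hx₀, hmax⟩ := hbd.isCompact_closure.exists_isMaxOn
    (f := fun x => u x ^ 2 + ‖g x‖ ^ 2) ⟨x, hx⟩ ((huc.pow 2).add (hgc.norm.pow 2))
  refine (hmax hx).trans ?_
  by_cases hx₀Ω : x₀ ∈ Ω
  · have hg₀ : g x₀ = 0 := hmax.eq_zero_of_hasGradientWithinAt_of_pos hg
      (Filter.mem_of_superset (hΩ.mem_nhds hx₀Ω) subset_closure)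
      (hu2.contDiffAt (hΩ.mem_nhds hx₀Ω)) (hpd x₀ hx₀Ω)
    refine le_max_of_le_right ?_
    simp only [hg₀, norm_zero, zero_pow two_ne_zero, add_zero]
    exact le_ciSup₂_of_bddAbove_image (hbd.isCompact_closure.bddAbove_image (huc.pow 2)) hx₀
  · have hx₀_frontier : x₀ ∈ frontier Ω := by rw [hΩ.frontier_eq]; exact ⟨hx₀, hx₀Ω⟩
    exact le_max_of_le_left (le_ciSup₂_of_bddAbove_image
      (hmax.bddAbove.mono (Set.image_mono frontier_subset_closure)) hx₀_frontier)
end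

section
/- Let A be a real symmetric n×n matrix all of whose eigenvalues are at least λ₀, with λ₀ > 0, let b ∈ ℝ^n, c ≥ 0, and 1 ≤ k ≤ n. Then the k-th elementary symmetric polynomial of the eigenvalues of A + c b bᵀ is at least e_k(λ₀, λ₀, …, λ₀, λ₀ + c‖b‖²), the k-th elementary symmetric polynomial of the n-tuple consisting of n−1 copies of λ₀ and one copy of λ₀ + c‖b‖². -/
open Matrix

noncomputable def esymm (n k : ℕ) (x : Fin n → ℝ) : ℝ :=
  ∑ t ∈ Finset.univ.powersetCard k, ∏ i ∈ t, x i

open Finset MatrixOrder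

/-!
Since `c b bᵀ` is positive semidefinite, `λ₀ ≤ A ≤ A + c b bᵀ` in the Loewner order, so every
eigenvalue `μᵢ` of the perturbed matrix is at least `λ₀`, and comparing traces gives
`∑ (μᵢ - λ₀) ≥ c‖b‖²`. On a `k`-subset `t`, `∏ᵢ (λ₀ + tᵢ) ≥ λ₀ᵏ + λ₀ᵏ⁻¹ ∑ᵢ tᵢ` for `tᵢ ≥ 0`,
with equality when only one `tᵢ` is nonzero. Summing over all `k`-subsets, every index is
counted `(n-1).choose (k-1)` times, so both sides become affine in the total excess over `λ₀`.
-/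

variable {ι R : Type*}

theorem Finset.sum_powersetCard_sum [DecidableEq ι] [AddCommMonoid R] (s : Finset ι) {k : ℕ}
    (hk : 1 ≤ k) (f : ι → R) :
    ∑ t ∈ s.powersetCard k, ∑ i ∈ t, f i = (#s - 1).choose (k - 1) • ∑ i ∈ s, f i := by
  calc ∑ t ∈ s.powersetCard k, ∑ i ∈ t, f i
      = ∑ i ∈ s, ∑ t ∈ s.powersetCard k with {i} ⊆ t, f i := by
        rw [sum_comm' (t' := s) (s' := fun i => (s.powersetCard k).filter ({i} ⊆ ·))]
        intro t i
        simp only [mem_filter, mem_powersetCard, singleton_subset_iff]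
        grind
    _ = (#s - 1).choose (k - 1) • ∑ i ∈ s, f i := by
        rw [smul_sum]
        refine sum_congr rfl fun i hi => ?_
        rw [sum_const, card_filter_powersetCard_subset _ _ _ (singleton_subset_iff.2 hi)
          (by simpa using hk), card_singleton]

theorem Finset.prod_add_eq_of_forall_ne_eq_zero [DecidableEq ι] [CommSemiring R]
    (t : Finset ι) (a : R) {u : ι → R} {j : ι} (hu : ∀ i ≠ j, u i = 0) :
    ∏ i ∈ t, (a + u i) = a ^ #t + a ^ (#t - 1) * ∑ i ∈ t, u i := by
  by_cases hj : j ∈ t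
  · rw [← mul_prod_erase t _ hj, prod_congr rfl fun i hi => by rw [hu i (ne_of_mem_erase hi),
      add_zero], prod_const, card_erase_of_mem hj, sum_eq_single_of_mem j hj
      fun i _ hi => hu i hi, add_mul, ← pow_succ', Nat.sub_add_cancel (card_pos.2 ⟨j, hj⟩),
      mul_comm]
  · rw [prod_congr rfl fun i hi => by rw [hu i (ne_of_mem_of_not_mem hi hj), add_zero],
      prod_const, sum_eq_zero fun i hi => hu i (ne_of_mem_of_not_mem hi hj), mul_zero, add_zero]

theorem Finset.pow_add_pow_mul_sum_le_prod_add [CommSemiring R] [PartialOrder R] [IsOrderedRing R]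
    (t : Finset ι) {a : R} (ha : 0 ≤ a) {u : ι → R} (hu : ∀ i ∈ t, 0 ≤ u i) :
    a ^ #t + a ^ (#t - 1) * ∑ i ∈ t, u i ≤ ∏ i ∈ t, (a + u i) := by
  classical
  induction t using Finset.induction_on with
  | empty => simp
  | insert j t hj ih =>
    have hu' : ∀ i ∈ t, 0 ≤ u i := fun i hi => hu i (mem_insert_of_mem hi)
    have huj : 0 ≤ u j := hu j (mem_insert_self j t)
    have hpow : a ^ #t * ∑ i ∈ t, u i ≤ a * (a ^ (#t - 1) * ∑ i ∈ t, u i) := by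
      rcases t.eq_empty_or_nonempty with rfl | ht
      · simp
      · rw [← mul_assoc, ← pow_succ', Nat.sub_add_cancel ht.card_pos]
    calc a ^ #(insert j t) + a ^ (#(insert j t) - 1) * ∑ i ∈ insert j t, u i
        = a * a ^ #t + a ^ #t * ∑ i ∈ t, u i + u j * a ^ #t := by
          rw [card_insert_of_notMem hj, sum_insert hj, Nat.add_sub_cancel, pow_succ']; ring
      _ ≤ a * a ^ #t + a * (a ^ (#t - 1) * ∑ i ∈ t, u i) + u j * a ^ #t +
            u j * (a ^ (#t - 1) * ∑ i ∈ t, u i) := by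
          refine le_add_of_le_of_nonneg (by gcongr) ?_
          exact mul_nonneg huj (mul_nonneg (pow_nonneg ha _) (sum_nonneg hu'))
      _ = (a + u j) * (a ^ #t + a ^ (#t - 1) * ∑ i ∈ t, u i) := by ring
      _ ≤ ∏ i ∈ insert j t, (a + u i) := by
          rw [prod_insert hj]
          exact mul_le_mul_of_nonneg_left (ih hu') (add_nonneg ha huj)

theorem Matrix.IsHermitian.forall_le_eigenvalues_iff {𝕜 n : Type*} [RCLike 𝕜] [Fintype n]
    [DecidableEq n] {A : Matrix n n 𝕜} (hA : A.IsHermitian) {r : ℝ} :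
    (∀ i, r ≤ hA.eigenvalues i) ↔ algebraMap ℝ (Matrix n n 𝕜) r ≤ A := by
  rw [algebraMap_le_iff_le_spectrum hA.isSelfAdjoint, hA.spectrum_real_eq_range_eigenvalues,
    Set.forall_mem_range]

theorem Matrix.IsHermitian.sum_eigenvalues {n : Type*} [Fintype n] [DecidableEq n]
    {A : Matrix n n ℝ} (hA : A.IsHermitian) : ∑ i, hA.eigenvalues i = A.trace := by
  simp [hA.trace_eq_sum_eigenvalues]

theorem esymm_add_le_esymm {n k : ℕ} (hk : 1 ≤ k) {a : ℝ} (ha : 0 ≤ a) {u x : Fin n → ℝ}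
    {j : Fin n} (hu : ∀ i ≠ j, u i = 0) (hx : ∀ i, a ≤ x i)
    (hsum : ∑ i, u i ≤ ∑ i, (x i - a)) :
    esymm n k (fun i => a + u i) ≤ esymm n k x := by
  have hcard {t : Finset (Fin n)} (ht : t ∈ univ.powersetCard k) : #t = k :=
    (mem_powersetCard.1 ht).2
  have hlinear (v : Fin n → ℝ) :
      ∑ t ∈ univ.powersetCard k, (a ^ k + a ^ (k - 1) * ∑ i ∈ t, v i) =
        #(univ.powersetCard k : Finset (Finset (Fin n))) • a ^ k +
          a ^ (k - 1) * ((n - 1).choose (k - 1) • ∑ i, v i) := by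
    rw [sum_add_distrib, sum_const, ← mul_sum, sum_powersetCard_sum _ hk, card_univ,
      Fintype.card_fin]
  calc esymm n k (fun i => a + u i)
      = ∑ t ∈ univ.powersetCard k, (a ^ k + a ^ (k - 1) * ∑ i ∈ t, u i) :=
        sum_congr rfl fun t ht => by rw [prod_add_eq_of_forall_ne_eq_zero t a hu, hcard ht]
    _ ≤ ∑ t ∈ univ.powersetCard k, (a ^ k + a ^ (k - 1) * ∑ i ∈ t, (x i - a)) := by
        rw [hlinear, hlinear]
        gcongr
    _ ≤ ∑ t ∈ univ.powersetCard k, ∏ i ∈ t, (a + (x i - a)) := by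
        refine sum_le_sum fun t ht => ?_
        rw [← hcard ht]
        exact pow_add_pow_mul_sum_le_prod_add t ha fun i _ => sub_nonneg.2 (hx i)
    _ = esymm n k x := by simp only [add_sub_cancel, esymm]

/-- If `A` is real symmetric with all eigenvalues `≥ λ₀ > 0`, `c ≥ 0` and `1 ≤ k ≤ n`,
then the `k`-th elementary symmetric polynomial of the eigenvalues of `A + c b bᵀ` is at
least `e_k(λ₀, …, λ₀, λ₀ + c‖b‖²)` (with `n − 1` copies of `λ₀`). -/
theorem stmt10 (n k : ℕ) (hk1 : 1 ≤ k) (hkn : k ≤ n)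
    (A : Matrix (Fin n) (Fin n) ℝ) (hA : A.IsHermitian)
    (lam : ℝ) (hlam : 0 < lam) (heig : ∀ i, lam ≤ hA.eigenvalues i)
    (b : Fin n → ℝ) (c : ℝ) (hc : 0 ≤ c)
    (hB : (A + c • Matrix.vecMulVec b b).IsHermitian) :
    esymm n k (fun i => if (i : ℕ) = n - 1 then lam + c * (∑ j, b j ^ 2) else lam)
      ≤ esymm n k hB.eigenvalues := by
  set s := c * ∑ j, b j ^ 2
  let j₀ : Fin n := ⟨n - 1, by omega⟩
  have hrankOne : 0 ≤ c • vecMulVec b b := by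
    simpa using ((posSemidef_vecMulVec_self_star b).smul hc).nonneg
  have hμ : ∀ i, lam ≤ hB.eigenvalues i := hB.forall_le_eigenvalues_iff.2 <|
    (hA.forall_le_eigenvalues_iff.1 heig).trans (le_add_of_nonneg_right hrankOne)
  have hexcess : s ≤ ∑ i, (hB.eigenvalues i - lam) := by
    have htrace : ∑ i, hB.eigenvalues i = ∑ i, hA.eigenvalues i + s := by
      simp [hB.sum_eigenvalues, hA.sum_eigenvalues, s, dotProduct, sq]
    rw [sum_sub_distrib, htrace, add_sub_right_comm, ← sum_sub_distrib]
    exact le_add_of_nonneg_left (sum_nonneg fun i _ => sub_nonneg.2 (heig i))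
  have hy : (fun i : Fin n => if (i : ℕ) = n - 1 then lam + s else lam) =
      fun i => lam + if i = j₀ then s else 0 := by
    ext i
    simp only [j₀, Fin.ext_iff]
    split_ifs <;> simp
  rw [hy]
  refine esymm_add_le_esymm hk1 hlam.le (j := j₀) (fun i hi => if_neg hi) hμ ?_
  rwa [sum_ite_eq', if_pos (mem_univ _)]
end
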